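/- arXiv:1106.2987 — 2 statements merged into one kernel-verified Lean document; each statement's English description precedes it below -/
import Mathlib

section
/- Among all trees on n ≥ 3 vertices, the star S_n is the unique tree with minimum average eccentricity; that is, for every tree T on n vertices, ecc(T) ≥ 2 − 1/n = ecc(S_n), with equality if and only if T ≅ S_n. -/
/-!
A vertex of eccentricity at most 1 in a tree is universal, and since trees are minimally
connected, a tree containing the spanning star at a vertex is that star. So either `T` is a star,
whose eccentricities are `1, 2, …, 2` with sum `2n - 1`, or every eccentricity is at least `2` and
`ecc T ≥ 2 > 2 - 1/n`.
-/

open SimpleGraph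

/-- The eccentricity of a vertex: the maximum distance from it to any other vertex. -/
noncomputable def eccentricity {V : Type*} [Fintype V] (G : SimpleGraph V) (v : V) : ℕ :=
  Finset.univ.sup fun u => G.dist v u

/-- The average eccentricity of a graph. -/
noncomputable def avgEcc {V : Type*} [Fintype V] (G : SimpleGraph V) : ℝ :=
  (∑ v : V, (eccentricity G v : ℝ)) / (Fintype.card V : ℝ)

/-- The star `S n` on `n` vertices with center `0`. -/
def starGraph (n : ℕ) : SimpleGraph (Fin n) :=
  SimpleGraph.fromRel (fun i _ => (i : ℕ) = 0)

namespace SimpleGraph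

variable {V W : Type*}

section Eccentricity

variable [Fintype V] {G : SimpleGraph V}

lemma dist_le_eccentricity (u v : V) : G.dist u v ≤ eccentricity G u :=
  Finset.le_sup (Finset.mem_univ v)

lemma eccentricity_le_iff {u : V} {k : ℕ} : eccentricity G u ≤ k ↔ ∀ v, G.dist u v ≤ k := by
  simp [eccentricity]

lemma Connected.isUniversal_of_eccentricity_le_one (hG : G.Connected) {u : V}
    (h : eccentricity G u ≤ 1) : G.IsUniversal u := fun v huv =>
  dist_eq_one_iff_adj.mp <|
    le_antisymm ((dist_le_eccentricity u v).trans h) (hG.pos_dist_of_ne huv)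

lemma two_le_avgEcc [Nonempty V] (h : ∀ v, 2 ≤ eccentricity G v) : 2 ≤ avgEcc G := by
  rw [avgEcc, le_div_iff₀ (by exact_mod_cast Fintype.card_pos)]
  calc 2 * (Fintype.card V : ℝ) = ∑ _v : V, (2 : ℝ) := by simp [mul_comm]
    _ ≤ ∑ v, (eccentricity G v : ℝ) := Finset.sum_le_sum fun v _ => by exact_mod_cast h v

end Eccentricity

section Star

lemma starGraph_le_of_isUniversal {G : SimpleGraph V} {r : V} (h : G.IsUniversal r) :
    starGraph r ≤ G := by
  rintro a b ⟨hab, rfl | rfl⟩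
  · exact h hab
  · exact (h hab.symm).symm

lemma IsTree.eq_starGraph_of_isUniversal {T : SimpleGraph V} (hT : T.IsTree) {r : V}
    (h : T.IsUniversal r) : T = starGraph r :=
  (isTree_iff_minimal_connected.mp hT).eq_of_le (connected_starGraph r)
    (starGraph_le_of_isUniversal h) |>.symm

lemma Iso.eq_starGraph {G : SimpleGraph V} {s : W} (φ : G ≃g starGraph s) :
    G = starGraph (φ.symm s) := by
  ext a b
  rw [← φ.map_adj_iff, starGraph_adj, starGraph_adj]
  simp [← RelIso.eq_symm_apply]

lemma nonempty_iso_starGraph [Fintype V] [Fintype W] (h : Fintype.card V = Fintype.card W)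
    (r : V) (s : W) : Nonempty (starGraph r ≃g starGraph s) := by
  classical
  let e : V ≃ W := (Fintype.equivOfCardEq h).trans (Equiv.swap (Fintype.equivOfCardEq h r) s)
  have he : ∀ a, e a = s ↔ a = r := fun a => by
    rw [← e.apply_eq_iff_eq (y := r)]
    simp [e]
  exact ⟨⟨e, by simp [he]⟩⟩

lemma dist_starGraph_center_le_one (r v : V) : (starGraph r).dist r v ≤ 1 := by
  rcases eq_or_ne r v with rfl | hv
  · simp
  · exact (dist_eq_one_iff_adj.mpr (starGraph_center_adj hv)).le

variable [Fintype V] {r : V}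

lemma eccentricity_starGraph_center [Nontrivial V] : eccentricity (starGraph r) r = 1 := by
  obtain ⟨v, hv⟩ := exists_ne r
  refine le_antisymm (eccentricity_le_iff.mpr (dist_starGraph_center_le_one r)) ?_
  calc 1 = (starGraph r).dist r v := (dist_eq_one_iff_adj.mpr (starGraph_center_adj hv.symm)).symm
    _ ≤ _ := dist_le_eccentricity r v

lemma eccentricity_starGraph_of_ne (hV : 3 ≤ Fintype.card V) {v : V} (hv : v ≠ r) :
    eccentricity (starGraph r) v = 2 := by
  obtain ⟨w, hwv, hwr⟩ := ENat.exists_ne_ne_of_three_le (by simpa using hV) v r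
  refine le_antisymm (eccentricity_le_iff.mpr fun u => ?_) ?_
  · calc (starGraph r).dist v u ≤ (starGraph r).dist v r + (starGraph r).dist r u :=
          (connected_starGraph r).dist_triangle
      _ ≤ 1 + 1 := by
          gcongr
          · exact dist_comm.le.trans (dist_starGraph_center_le_one r v)
          · exact dist_starGraph_center_le_one r u
  · calc 2 ≤ (starGraph r).dist v w :=
          (connected_starGraph r).one_lt_dist_of_ne_of_not_adj hwv.symm (by simp [hv, hwr])
      _ ≤ _ := dist_le_eccentricity v w

lemma avgEcc_starGraph (hV : 3 ≤ Fintype.card V) (r : V) :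
    avgEcc (starGraph r) = 2 - 1 / (Fintype.card V : ℝ) := by
  classical
  have : Nontrivial V := Fintype.one_lt_card_iff_nontrivial.mp (by omega)
  rw [avgEcc, ← Finset.add_sum_erase _ _ (Finset.mem_univ r), eccentricity_starGraph_center,
    Finset.sum_congr rfl fun v hv =>
      by rw [eccentricity_starGraph_of_ne hV (Finset.ne_of_mem_erase hv)]]
  simp [Finset.card_erase_of_mem, Nat.cast_sub (by omega : 1 ≤ Fintype.card V)]
  field_simp
  ring

end Star

end SimpleGraph

lemma starGraph_eq_starGraph_zero (n : ℕ) [NeZero n] :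
    _root_.starGraph n = SimpleGraph.starGraph (0 : Fin n) := by
  ext i j
  simp only [_root_.starGraph, fromRel_adj, SimpleGraph.starGraph_adj, Fin.ext_iff, Fin.val_zero]

/-- Among trees on `n ≥ 3` vertices, the star `Sₙ` is the unique tree minimizing the
average eccentricity: `ecc T ≥ 2 - 1/n = ecc Sₙ` with equality iff `T ≅ Sₙ`. -/
theorem star_min_avgEcc {V : Type*} [Fintype V] (T : SimpleGraph V) (hT : T.IsTree)
    {n : ℕ} (hn : 3 ≤ n) (hcard : Fintype.card V = n) :
    2 - 1 / (n : ℝ) ≤ avgEcc T ∧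
    avgEcc (_root_.starGraph n) = 2 - 1 / (n : ℝ) ∧
    (avgEcc T = 2 - 1 / (n : ℝ) ↔ Nonempty (T ≃g _root_.starGraph n)) := by
  subst hcard
  have : NeZero (Fintype.card V) := ⟨by omega⟩
  have hstar : avgEcc (_root_.starGraph (Fintype.card V)) = 2 - 1 / (Fintype.card V : ℝ) := by
    simpa [starGraph_eq_starGraph_zero] using
      SimpleGraph.avgEcc_starGraph (by simpa using hn) (0 : Fin (Fintype.card V))
  by_cases hcenter : ∃ r, eccentricity T r ≤ 1
  · obtain ⟨r, hr⟩ := hcenter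
    obtain rfl :=
      hT.eq_starGraph_of_isUniversal (hT.connected.isUniversal_of_eccentricity_le_one hr)
    have havg := SimpleGraph.avgEcc_starGraph hn r
    refine ⟨havg.ge, hstar, iff_of_true havg ?_⟩
    rw [starGraph_eq_starGraph_zero]
    exact SimpleGraph.nonempty_iso_starGraph (by simp) r 0
  · push Not at hcenter
    have : Nonempty V := Fintype.card_pos_iff.mp (by omega)
    have hlt : 2 - 1 / (Fintype.card V : ℝ) < avgEcc T := by
      have htwo := SimpleGraph.two_le_avgEcc hcenter
      have hpos : (0 : ℝ) < 1 / Fintype.card V := by positivity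
      linarith
    refine ⟨hlt.le, hstar, iff_of_false hlt.ne' ?_⟩
    rintro ⟨φ⟩
    rw [starGraph_eq_starGraph_zero] at φ
    rw [φ.eq_starGraph, SimpleGraph.avgEcc_starGraph hn] at hlt
    exact lt_irrefl _ hlt
end

section
/- Among all unicyclic graphs on n ≥ 4 vertices, the graph S_n′ obtained from the star S_n by adding an edge between two pendant vertices has minimum average eccentricity: for every connected unicyclic graph G on n vertices, ecc(G) ≥ 2 − 1/n = ecc(S_n′). -/
open SimpleGraph

/-- The graph `Sₙ'` obtained from the star on `n` vertices with center `0` by adding an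
edge between the two pendant vertices `1` and `2`. -/
def starGraphPlusEdge (n : ℕ) : SimpleGraph (Fin n) :=
  SimpleGraph.fromRel (fun i j => (i : ℕ) = 0 ∨ ((i : ℕ) = 1 ∧ (j : ℕ) = 2))

/-!
In a connected graph on at least two vertices every vertex has eccentricity at least `1`, with
equality exactly at the universal vertices. Two universal vertices already force `2n - 3` edges,
more than the `n` edges of a unicyclic graph once `n ≥ 4`; so at most one vertex has eccentricity
`1` and the eccentricity sum is at least `2n - 1`. In `Sₙ'` the centre is universal and every
other vertex has a non-neighbour, hence eccentricity `2`, so the bound is attained.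
-/

open Finset

section Eccentricity

variable {V : Type*} [Fintype V] {G : SimpleGraph V}

lemma dist_le_eccentricity (v u : V) : G.dist v u ≤ eccentricity G v :=
  le_sup (f := fun u => G.dist v u) (mem_univ u)

lemma eccentricity_le_iff {v : V} {k : ℕ} :
    eccentricity G v ≤ k ↔ ∀ u, G.dist v u ≤ k := by
  simp [eccentricity]

lemma SimpleGraph.Connected.one_le_eccentricity [Nontrivial V] (hG : G.Connected) (v : V) :
    1 ≤ eccentricity G v := by
  obtain ⟨u, hu⟩ := exists_ne v
  exact (hG.pos_dist_of_ne hu.symm).trans_le (dist_le_eccentricity v u)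

lemma SimpleGraph.Connected.two_le_eccentricity (hG : G.Connected) {v u : V} (hvu : v ≠ u)
    (hadj : ¬G.Adj v u) : 2 ≤ eccentricity G v :=
  (hG.one_lt_dist_of_ne_of_not_adj hvu hadj).trans_le (dist_le_eccentricity v u)

lemma SimpleGraph.Connected.isUniversal_iff_eccentricity_le_one (hG : G.Connected) {v : V} :
    G.IsUniversal v ↔ eccentricity G v ≤ 1 := by
  rw [eccentricity_le_iff]
  refine ⟨fun hv u => ?_, fun hv u hvu => ?_⟩
  · rcases eq_or_ne v u with rfl | hvu
    · simp
    · exact (dist_eq_one_iff_adj.2 (hv hvu)).le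
  · exact dist_eq_one_iff_adj.1 ((hv u).antisymm (hG.pos_dist_of_ne hvu))

lemma SimpleGraph.IsUniversal.eccentricity_le_two {z : V} (hz : G.IsUniversal z) (v : V) :
    eccentricity G v ≤ 2 := by
  have hG := Connected.of_isUniversal hz
  have hdist := eccentricity_le_iff.1 (hG.isUniversal_iff_eccentricity_le_one.1 hz)
  refine eccentricity_le_iff.2 fun u => ?_
  calc G.dist v u ≤ G.dist v z + G.dist z u := hG.dist_triangle
    _ ≤ 1 + 1 := by rw [dist_comm]; exact add_le_add (hdist v) (hdist u)

lemma two_mul_card_le_card_edgeFinset_add_three [DecidableRel G.Adj] {u w : V} (huw : u ≠ w)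
    (hu : G.IsUniversal u) (hw : G.IsUniversal w) :
    2 * Fintype.card V ≤ #G.edgeFinset + 3 := by
  classical
  have hdeg_rest : ∀ x ∈ (univ.erase u).erase w, 2 ≤ G.degree x := by
    intro x hx
    obtain ⟨hxw, hxu⟩ : x ≠ w ∧ x ≠ u := by simpa using hx
    rw [← card_neighborFinset_eq_degree, ← card_pair huw]
    refine card_le_card (insert_subset_iff.2 ⟨?_, singleton_subset_iff.2 ?_⟩) <;>
      rw [mem_neighborFinset]
    exacts [(hu hxu.symm).symm, (hw hxw.symm).symm]
  have hsum : G.degree u + G.degree w + ∑ x ∈ (univ.erase u).erase w, G.degree x =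
      2 * #G.edgeFinset := by
    rw [add_assoc, add_sum_erase _ (fun x => G.degree x) (mem_erase.2 ⟨huw.symm, mem_univ w⟩),
      add_sum_erase _ (fun x => G.degree x) (mem_univ u)]
    exact G.sum_degrees_eq_twice_card_edges
  have hrest := card_nsmul_le_sum _ _ 2 hdeg_rest
  have hcard_rest : #((univ.erase u).erase w) = Fintype.card V - 2 := by
    simp [card_erase_of_mem, mem_erase, huw.symm, Nat.sub_sub]
  rw [(G.degree_eq_card_sub_one u).2 hu, (G.degree_eq_card_sub_one w).2 hw] at hsum
  rw [hcard_rest, smul_eq_mul] at hrest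
  omega

lemma subsingleton_universalVerts_of_card_edgeFinset_add_three_lt [DecidableRel G.Adj]
    (h : #G.edgeFinset + 3 < 2 * Fintype.card V) : G.universalVerts.Subsingleton := by
  intro u hu w hw
  by_contra huw
  exact h.not_ge (two_mul_card_le_card_edgeFinset_add_three huw hu hw)

lemma SimpleGraph.Connected.two_mul_card_le_sum_eccentricity_add_one [Nontrivial V]
    (hG : G.Connected) (hsub : G.universalVerts.Subsingleton) :
    2 * Fintype.card V ≤ ∑ v, eccentricity G v + 1 := by
  have hlow : #{v | eccentricity G v ≤ 1} ≤ 1 := card_le_one.2 fun a ha b hb => hsub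
    (hG.isUniversal_iff_eccentricity_le_one.2 (mem_filter.1 ha).2)
    (hG.isUniversal_iff_eccentricity_le_one.2 (mem_filter.1 hb).2)
  have hpoint :
      ∀ v ∈ univ, 2 ≤ eccentricity G v + if eccentricity G v ≤ 1 then 1 else 0 := by
    intro v _
    have := hG.one_le_eccentricity v
    split_ifs <;> omega
  have hsum := card_nsmul_le_sum univ _ 2 hpoint
  rw [sum_add_distrib, ← card_filter, smul_eq_mul, card_univ, mul_comm] at hsum
  omega

lemma SimpleGraph.IsUniversal.sum_eccentricity_add_one [Nontrivial V] {z : V}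
    (hz : G.IsUniversal z) (hnonadj : ∀ v ≠ z, ∃ u ≠ v, ¬G.Adj v u) :
    ∑ v, eccentricity G v + 1 = 2 * Fintype.card V := by
  classical
  have hG := Connected.of_isUniversal hz
  have hpoint : ∀ v ∈ univ, eccentricity G v + (if v = z then 1 else 0) = 2 := by
    intro v _
    have := hz.eccentricity_le_two v
    split_ifs with hvz
    · subst hvz
      have := hG.isUniversal_iff_eccentricity_le_one.1 hz
      have := hG.one_le_eccentricity v
      omega
    · obtain ⟨u, hvu, hadj⟩ := hnonadj v hvz
      have := hG.two_le_eccentricity hvu.symm hadj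
      omega
  have hsum := sum_congr rfl hpoint
  rw [sum_add_distrib, sum_ite_eq', if_pos (mem_univ z), sum_const, card_univ,
    smul_eq_mul] at hsum
  rw [hsum, mul_comm]

lemma two_sub_inv_card_le_avgEcc [Nonempty V]
    (h : 2 * Fintype.card V ≤ ∑ v, eccentricity G v + 1) :
    2 - 1 / (Fintype.card V : ℝ) ≤ avgEcc G := by
  have hpos : (0 : ℝ) < Fintype.card V := by exact_mod_cast Fintype.card_pos
  rw [avgEcc, le_div_iff₀ hpos, sub_mul, one_div_mul_cancel hpos.ne', ← Nat.cast_sum]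
  have : (2 * Fintype.card V : ℝ) ≤ (∑ v, eccentricity G v : ℕ) + 1 := by exact_mod_cast h
  linarith

lemma avgEcc_eq_two_sub_inv_card (h : ∑ v, eccentricity G v + 1 = 2 * Fintype.card V) :
    avgEcc G = 2 - 1 / (Fintype.card V : ℝ) := by
  have hpos : (0 : ℝ) < Fintype.card V := by exact_mod_cast (show 0 < Fintype.card V by omega)
  rw [avgEcc, div_eq_iff hpos.ne', sub_mul, one_div_mul_cancel hpos.ne', ← Nat.cast_sum]
  have : ((∑ v, eccentricity G v : ℕ) : ℝ) + 1 = 2 * Fintype.card V := by exact_mod_cast h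
  linarith

end Eccentricity

lemma starGraphPlusEdge_adj {n : ℕ} {i j : Fin n} :
    (starGraphPlusEdge n).Adj i j ↔
      i ≠ j ∧ ((i : ℕ) = 0 ∨ (j : ℕ) = 0 ∨
        (i : ℕ) = 1 ∧ (j : ℕ) = 2 ∨ (i : ℕ) = 2 ∧ (j : ℕ) = 1) := by
  rw [starGraphPlusEdge, fromRel_adj]
  tauto

lemma isUniversal_starGraphPlusEdge_zero {n : ℕ} (hn : 0 < n) :
    (starGraphPlusEdge n).IsUniversal ⟨0, hn⟩ := fun _ h0j =>
  starGraphPlusEdge_adj.2 ⟨h0j, Or.inl rfl⟩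

lemma starGraphPlusEdge_exists_not_adj {n : ℕ} (hn : 4 ≤ n) (v : Fin n)
    (hv : v ≠ ⟨0, by omega⟩) : ∃ u ≠ v, ¬(starGraphPlusEdge n).Adj v u := by
  have hv0 : (v : ℕ) ≠ 0 := fun h => hv (Fin.ext h)
  obtain ⟨u, hun, hu⟩ :
      ∃ u < n, u ≠ 0 ∧ u ≠ v ∧ ¬((v : ℕ) = 1 ∧ u = 2 ∨ (v : ℕ) = 2 ∧ u = 1) :=
    if hv2 : (v : ℕ) ≤ 2 then ⟨3, by omega⟩ else ⟨1, by omega⟩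
  refine ⟨⟨u, hun⟩, fun h => hu.2.1 (congrArg Fin.val h), fun h => ?_⟩
  simp only [starGraphPlusEdge_adj] at h
  omega

lemma sum_eccentricity_starGraphPlusEdge_add_one {n : ℕ} (hn : 4 ≤ n) :
    ∑ v, eccentricity (starGraphPlusEdge n) v + 1 = 2 * n := by
  have : Nontrivial (Fin n) := Fin.nontrivial_iff_two_le.2 (by omega)
  simpa using (isUniversal_starGraphPlusEdge_zero (by omega)).sum_eccentricity_add_one
    (starGraphPlusEdge_exists_not_adj hn)

/-- Among connected unicyclic graphs (connected graphs with `n` vertices and `n` edges)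
on `n ≥ 4` vertices, the graph `Sₙ'` has minimum average eccentricity:
`ecc G ≥ 2 - 1/n = ecc Sₙ'`. -/
theorem unicyclic_min_avgEcc {V : Type*} [Fintype V] (G : SimpleGraph V)
    [DecidableRel G.Adj] (hG : G.Connected) {n : ℕ} (hn : 4 ≤ n)
    (hcard : Fintype.card V = n) (hunicyclic : G.edgeFinset.card = n) :
    2 - 1 / (n : ℝ) ≤ avgEcc G ∧
    avgEcc (starGraphPlusEdge n) = 2 - 1 / (n : ℝ) := by
  have : Nontrivial V := Fintype.one_lt_card_iff_nontrivial.1 (by omega)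
  have hsub : G.universalVerts.Subsingleton :=
    subsingleton_universalVerts_of_card_edgeFinset_add_three_lt (by omega)
  constructor
  · simpa [hcard] using
      two_sub_inv_card_le_avgEcc (hG.two_mul_card_le_sum_eccentricity_add_one hsub)
  · simpa using avgEcc_eq_two_sub_inv_card
      ((sum_eccentricity_starGraphPlusEdge_add_one hn).trans (by simp))
end
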